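/- Let p : E → B and α : B' → B be continuous maps, and let p' : E' → B' be the pullback of p along α, i.e., E' = {(b', e) ∈ B' × E : α(b') = p(e)} with the subspace topology and p'(b', e) = b'. Let f : B → C be continuous and set f' = f ∘ α : B' → C. Then secat_{f'}[p' : E' → B'] ≤ secat_f[p : E → B]. -/

import Mathlib

/-- The relative sectional category `secat_f[p : E → B]` of `p : E → B` with respect to
`f : B → C`: the least `n` such that there are open sets `U_0, …, U_n ⊆ C` with
`f(B) ⊆ U_0 ∪ ⋯ ∪ U_n` and `p` admitting a continuous section over each `f⁻¹(U_i)`. -/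
noncomputable def secatf {E B C : Type*} [TopologicalSpace E] [TopologicalSpace B]
    [TopologicalSpace C] (p : C(E, B)) (f : C(B, C)) : ℕ∞ :=
  sInf {n : ℕ∞ | ∃ m : ℕ, n = m ∧ ∃ U : Fin (m + 1) → Set C,
    (∀ i, IsOpen (U i)) ∧ Set.range f ⊆ (⋃ i, U i) ∧
    ∀ i, ∃ s : C((⇑f ⁻¹' U i : Set B), E), ∀ x, p (s x) = (x : B)}

open Set

def HasSectionOn {E B : Type*} [TopologicalSpace E] [TopologicalSpace B]
    (p : C(E, B)) (S : Set B) : Prop :=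
  ∃ s : C(S, E), ∀ x, p (s x) = (x : B)

theorem secatf_le_secatf {E B C E' B' : Type*} [TopologicalSpace E] [TopologicalSpace B]
    [TopologicalSpace C] [TopologicalSpace E'] [TopologicalSpace B']
    {p : C(E, B)} {f : C(B, C)} {p' : C(E', B')} {f' : C(B', C)}
    (hrange : range f' ⊆ range f)
    (hsection : ∀ U : Set C, IsOpen U → HasSectionOn p (f ⁻¹' U) → HasSectionOn p' (f' ⁻¹' U)) :
    secatf p' f' ≤ secatf p f := by
  apply sInf_le_sInf
  rintro n ⟨m, rfl, U, hopen, hcov, hsec⟩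
  exact ⟨m, rfl, U, hopen, hrange.trans hcov, fun i => hsection (U i) (hopen i) (hsec i)⟩

section Pullback

variable {E B B' : Type*} [TopologicalSpace E] [TopologicalSpace B] [TopologicalSpace B']

def pullbackFst (p : C(E, B)) (α : C(B', B)) : C({q : B' × E // α q.1 = p q.2}, B') :=
  ⟨fun x => x.1.1, continuous_fst.comp continuous_subtype_val⟩

theorem HasSectionOn.pullback {p : C(E, B)} {S : Set B} (h : HasSectionOn p S)
    (α : C(B', B)) : HasSectionOn (pullbackFst p α) (α ⁻¹' S) := by
  obtain ⟨s, hs⟩ := h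
  let s' : C(α ⁻¹' S, S) := α.restrictPreimage S
  refine ⟨⟨fun x => ⟨(x.1, s (s' x)), (hs (s' x)).symm⟩, ?_⟩, fun x => rfl⟩
  fun_prop

end Pullback

/-- Let `p' : E' → B'` be the pullback of `p : E → B` along `α : B' → B`,
where `E' = {(b', e) : α(b') = p(e)}` and `p'(b', e) = b'`. For `f : B → C` and
`f' = f ∘ α` one has `secat_{f'}[p'] ≤ secat_f[p]`. -/
theorem secatf_pullback {E B B' C : Type*} [TopologicalSpace E] [TopologicalSpace B]
    [TopologicalSpace B'] [TopologicalSpace C] (p : C(E, B)) (α : C(B', B)) (f : C(B, C)) :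
    secatf (⟨fun x : {q : B' × E // α q.1 = p q.2} => x.1.1,
        (continuous_fst.comp continuous_subtype_val)⟩ :
        C({q : B' × E // α q.1 = p q.2}, B'))
      (f.comp α) ≤ secatf p f :=
  secatf_le_secatf (p' := pullbackFst p α) (range_comp_subset_range α f)
    fun _ _ h => h.pullback α
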